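/- arXiv:2603.20780 — 5 statements merged into one kernel-verified Lean document; each statement's English description precedes it below -/
import Mathlib

section
/- Let V ⊆ ℝ be an open interval, G : V → ℝ strictly convex and differentiable with derivative g = G', let S be a finite index set, x_i ∈ ℝ^p and ω_i^{(0)} ∈ V for i ∈ S, and T ∈ ℝ^p. Suppose λ ∈ ℝ^p is such that for every i ∈ S there exists ω̂_i ∈ V with g(ω̂_i) = g(ω_i^{(0)}) + x_i^⊤λ, and suppose Σ_{i∈S} ω̂_i x_i = T. Then for every ω ∈ V^S satisfying the calibration constraint Σ_{i∈S} ω_i x_i = T, the Pythagorean identity Σ_{i∈S} D_G(ω_i ‖ ω_i^{(0)}) = Σ_{i∈S} D_G(ω_i ‖ ω̂_i) + Σ_{i∈S} D_G(ω̂_i ‖ ω_i^{(0)}) holds; consequently ω̂ = (ω̂_i)_{i∈S} is the unique minimizer of Σ_{i∈S} D_G(ω_i ‖ ω_i^{(0)}) over {ω ∈ V^S : Σ_{i∈S} ω_i x_i = T}. -/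
open Finset

/-- A strictly convex differentiable function lies strictly above its tangent lines. -/
lemma bregmanDiv_pos {V : Set ℝ} {G g : ℝ → ℝ} (hG : StrictConvexOn ℝ V G)
    (hg : ∀ t ∈ V, HasDerivAt G (g t) t) {a b : ℝ} (ha : a ∈ V) (hb : b ∈ V)
    (hab : a ≠ b) : 0 < G a - G b - g b * (a - b) := by
  rcases lt_or_gt_of_ne hab with h | h
  · -- a < b : slope G a b < g b
    have hs := hG.slope_lt_of_hasDerivAt ha hb h (hg b hb)
    rw [slope_def_field, div_lt_iff₀ (by linarith)] at hs
    nlinarith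
  · -- b < a : g b < slope G b a
    have hs := hG.lt_slope_of_hasDerivAt hb ha h (hg b hb)
    rw [slope_def_field, lt_div_iff₀ (by linarith)] at hs
    nlinarith

/-- The Bregman divergence `D_G(a ‖ b) = G a − G b − g b (a − b)` generated by `G`
with derivative `g = G'`. -/
noncomputable def bregmanDiv (G g : ℝ → ℝ) (a b : ℝ) : ℝ :=
  G a - G b - g b * (a - b)

/-- Pythagorean identity for Bregman calibration: if the weights
`ŵᵢ` obtained from the dual link `g(ŵᵢ) = g(ωᵢ⁽⁰⁾) + xᵢᵀλ` satisfy the calibration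
constraint `Σ ŵᵢ xᵢ = T`, then for every feasible weight vector `ω` the Pythagorean
identity holds and `ŵ` is the unique minimizer of `Σᵢ D_G(ωᵢ ‖ ωᵢ⁽⁰⁾)` subject to
`Σᵢ ωᵢ xᵢ = T`. -/
theorem bregman_calibration_pythagorean {ι : Type*} [Fintype ι] (p : ℕ)
    (V : Set ℝ) (hVo : IsOpen V) (hVc : Convex ℝ V)
    (G g : ℝ → ℝ) (hG : StrictConvexOn ℝ V G)
    (hg : ∀ t ∈ V, HasDerivAt G (g t) t)
    (x : ι → Fin p → ℝ) (w0 : ι → ℝ) (hw0 : ∀ i, w0 i ∈ V)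
    (T : Fin p → ℝ) (lam : Fin p → ℝ) (what : ι → ℝ)
    (hwhat : ∀ i, what i ∈ V)
    (hlink : ∀ i, g (what i) = g (w0 i) + ∑ k, x i k * lam k)
    (hcal : ∑ i, what i • x i = T) :
    ∀ ω : ι → ℝ, (∀ i, ω i ∈ V) → (∑ i, ω i • x i = T) →
      (∑ i, bregmanDiv G g (ω i) (w0 i)
          = ∑ i, bregmanDiv G g (ω i) (what i)
            + ∑ i, bregmanDiv G g (what i) (w0 i))
      ∧ ∑ i, bregmanDiv G g (what i) (w0 i) ≤ ∑ i, bregmanDiv G g (ω i) (w0 i)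
      ∧ (∑ i, bregmanDiv G g (ω i) (w0 i) = ∑ i, bregmanDiv G g (what i) (w0 i)
          → ω = what) := by
  intro ω hω hωcal
  -- Pythagorean identity
  have key : ∀ i, bregmanDiv G g (ω i) (w0 i)
      - bregmanDiv G g (ω i) (what i) - bregmanDiv G g (what i) (w0 i)
      = ∑ k, lam k * (ω i * x i k - what i * x i k) := by
    intro i
    simp only [bregmanDiv, hlink i]
    rw [Finset.sum_congr rfl (fun k _ => by ring : ∀ k ∈ Finset.univ,
      lam k * (ω i * x i k - what i * x i k) = x i k * lam k * (ω i - what i)),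
      ← Finset.sum_mul]
    ring
  have hsum0 : ∑ i, (bregmanDiv G g (ω i) (w0 i)
      - bregmanDiv G g (ω i) (what i) - bregmanDiv G g (what i) (w0 i)) = 0 := by
    rw [Finset.sum_congr rfl fun i _ => key i, Finset.sum_comm]
    apply Finset.sum_eq_zero
    intro k _
    rw [← Finset.mul_sum, Finset.sum_sub_distrib]
    have h1 : ∑ i, ω i * x i k = T k := by
      rw [← congrFun hωcal k, Finset.sum_apply]; simp [Pi.smul_apply, smul_eq_mul]
    have h2 : ∑ i, what i * x i k = T k := by
      rw [← congrFun hcal k, Finset.sum_apply]; simp [Pi.smul_apply, smul_eq_mul]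
    rw [h1, h2]; ring
  rw [Finset.sum_sub_distrib, Finset.sum_sub_distrib, sub_sub, sub_eq_zero] at hsum0
  refine ⟨hsum0, ?_, ?_⟩
  · rw [hsum0]
    have : 0 ≤ ∑ i, bregmanDiv G g (ω i) (what i) := by
      apply Finset.sum_nonneg
      intro i _
      rcases eq_or_ne (ω i) (what i) with h | h
      · simp [bregmanDiv, h]
      · exact le_of_lt (bregmanDiv_pos hG hg (hω i) (hwhat i) h)
    linarith
  · intro heq
    rw [hsum0] at heq
    have hz : ∑ i, bregmanDiv G g (ω i) (what i) = 0 := by linarith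
    funext i
    by_contra h
    have hpos : 0 < ∑ i, bregmanDiv G g (ω i) (what i) := by
      refine Finset.sum_pos' ?_ ⟨i, Finset.mem_univ i, ?_⟩
      · intro j _
        rcases eq_or_ne (ω j) (what j) with h' | h'
        · simp [bregmanDiv, h']
        · exact le_of_lt (bregmanDiv_pos hG hg (hω j) (hwhat j) h')
      · exact bregmanDiv_pos hG hg (hω i) (hwhat i) h
    linarith
end

section
/- Let V ⊆ ℝ be an open interval, G : V → ℝ strictly convex and differentiable with derivative g = G', let S be a finite index set, x_i ∈ ℝ^p and ω_i^{(0)} ∈ V for i ∈ S, and T ∈ ℝ^p. Fix λ ∈ ℝ^p and suppose that for every i ∈ S there exists ω_i^⋆(λ) ∈ V with g(ω_i^⋆(λ)) = g(ω_i^{(0)}) + x_i^⊤λ. Then the Lagrangian L(ω, λ) = −Σ_{i∈S} D_G(ω_i ‖ ω_i^{(0)}) + λ^⊤(Σ_{i∈S} ω_i x_i − T) attains its maximum over ω ∈ V^S uniquely at ω = (ω_i^⋆(λ))_{i∈S}. -/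
open Finset

/-- Strict tangent-line inequality for a strictly convex differentiable function. -/
lemma tangent_lt {V : Set ℝ} {G g : ℝ → ℝ} (hG : StrictConvexOn ℝ V G)
    (hg : ∀ t ∈ V, HasDerivAt G (g t) t) {s t : ℝ} (hs : s ∈ V) (ht : t ∈ V)
    (hne : t ≠ s) : G s + g s * (t - s) < G t := by
  rcases lt_or_gt_of_ne hne with h | h
  · -- t < s
    have := hG.slope_lt_of_hasDerivAt ht hs h (hg s hs)
    rw [slope_def_field] at this
    have hd : s - t > 0 := by linarith
    rw [div_lt_iff₀ hd] at this
    nlinarith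
  · -- s < t
    have := hG.lt_slope_of_hasDerivAt hs ht h (hg s hs)
    rw [slope_def_field] at this
    have hd : t - s > 0 := by linarith
    rw [lt_div_iff₀ hd] at this
    nlinarith

/-- For a fixed multiplier `λ`, the Lagrangian
`L(ω, λ) = −Σᵢ D_G(ωᵢ ‖ ωᵢ⁽⁰⁾) + λᵀ(Σᵢ ωᵢ xᵢ − T)` of the Bregman calibration
problem attains its maximum over `ω ∈ V^S` uniquely at the weights
`ωᵢ⋆(λ)` determined by the link `g(ωᵢ⋆(λ)) = g(ωᵢ⁽⁰⁾) + xᵢᵀλ`. -/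
theorem bregman_lagrangian_inner_maximizer {ι : Type*} [Fintype ι] (p : ℕ)
    (V : Set ℝ) (hVo : IsOpen V) (hVc : Convex ℝ V)
    (G g : ℝ → ℝ) (hG : StrictConvexOn ℝ V G)
    (hg : ∀ t ∈ V, HasDerivAt G (g t) t)
    (x : ι → Fin p → ℝ) (w0 : ι → ℝ) (hw0 : ∀ i, w0 i ∈ V)
    (T : Fin p → ℝ) (lam : Fin p → ℝ) (wstar : ι → ℝ)
    (hwstar : ∀ i, wstar i ∈ V)
    (hlink : ∀ i, g (wstar i) = g (w0 i) + ∑ k, x i k * lam k) :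
    ∀ ω : ι → ℝ, (∀ i, ω i ∈ V) →
      (-(∑ i, bregmanDiv G g (ω i) (w0 i))
            + ∑ k, lam k * ((∑ i, ω i * x i k) - T k)
        ≤ -(∑ i, bregmanDiv G g (wstar i) (w0 i))
            + ∑ k, lam k * ((∑ i, wstar i * x i k) - T k))
      ∧ ((-(∑ i, bregmanDiv G g (ω i) (w0 i))
            + ∑ k, lam k * ((∑ i, ω i * x i k) - T k)
          = -(∑ i, bregmanDiv G g (wstar i) (w0 i))
            + ∑ k, lam k * ((∑ i, wstar i * x i k) - T k))
          → ω = wstar) := by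
  -- per-coordinate objective
  set φ : ι → ℝ → ℝ := fun i t =>
    bregmanDiv G g t (w0 i) - (∑ k, x i k * lam k) * t with hφ
  -- rewrite the Lagrangian
  have Lform : ∀ ω : ι → ℝ,
      -(∑ i, bregmanDiv G g (ω i) (w0 i))
          + ∑ k, lam k * ((∑ i, ω i * x i k) - T k)
        = -(∑ i, φ i (ω i)) - ∑ k, lam k * T k := by
    intro ω
    have h1 : ∑ k, lam k * ((∑ i, ω i * x i k) - T k)
        = (∑ i, (∑ k, x i k * lam k) * ω i) - ∑ k, lam k * T k := by
      simp_rw [mul_sub]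
      rw [Finset.sum_sub_distrib]
      congr 1
      simp_rw [Finset.mul_sum]
      rw [Finset.sum_comm]
      refine Finset.sum_congr rfl fun i _ => ?_
      rw [Finset.sum_mul]
      exact Finset.sum_congr rfl fun k _ => by ring
    rw [h1, hφ]
    simp only [Finset.sum_sub_distrib]
    ring
  -- per-coordinate strict inequality
  have key : ∀ i, ∀ t ∈ V, t ≠ wstar i → φ i (wstar i) < φ i t := by
    intro i t ht hne
    have htan := tangent_lt hG hg (hwstar i) ht hne
    have hl := hlink i
    rw [hl] at htan
    simp only [hφ, bregmanDiv]
    nlinarith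
  have keyle : ∀ i, ∀ t ∈ V, φ i (wstar i) ≤ φ i t := by
    intro i t ht
    rcases eq_or_ne t (wstar i) with rfl | hne
    · exact le_refl _
    · exact (key i t ht hne).le
  intro ω hω
  constructor
  · rw [Lform ω, Lform wstar]
    have : ∑ i, φ i (wstar i) ≤ ∑ i, φ i (ω i) :=
      Finset.sum_le_sum fun i _ => keyle i (ω i) (hω i)
    linarith
  · intro heq
    by_contra hne
    have : ∃ j, ω j ≠ wstar j := by
      by_contra h; push_neg at h; exact hne (funext h)
    obtain ⟨j, hj⟩ := this
    have hlt : ∑ i, φ i (wstar i) < ∑ i, φ i (ω i) :=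
      Finset.sum_lt_sum (fun i _ => keyle i (ω i) (hω i))
        ⟨j, Finset.mem_univ j, key j (ω j) (hω j) hj⟩
    rw [Lform ω, Lform wstar] at heq
    linarith
end

section
/- Let V ⊆ ℝ be an open interval, G : V → ℝ strictly convex and continuously differentiable with strictly increasing derivative g = G' and inverse g^{-1} : W → V on W = g(V), and let F(ν) = ν·g^{-1}(ν) − G(g^{-1}(ν)) be the convex conjugate. Let S be a finite index set, x_i ∈ ℝ^p, ω_i^{(0)} ∈ V, T ∈ ℝ^p, and fix λ ∈ ℝ^p such that ν_i(λ) := g(ω_i^{(0)}) + x_i^⊤λ ∈ W for all i ∈ S, and set ω_i^⋆(λ) = g^{-1}(ν_i(λ)). Then the value of the Lagrangian at the inner maximizer satisfies the dual representation ℓ(λ) := −Σ_{i∈S} D_G(ω_i^⋆(λ) ‖ ω_i^{(0)}) + λ^⊤(Σ_{i∈S} ω_i^⋆(λ) x_i − T) = Σ_{i∈S} F(ν_i(λ)) − λ^⊤T + C(ω^{(0)}), where C(ω^{(0)}) = Σ_{i∈S} {G(ω_i^{(0)}) − g(ω_i^{(0)})·ω_i^{(0)}}. -/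
open Finset

/-- Dual representation of the Lagrangian at the inner maximizer:
with `νᵢ(λ) = g(ωᵢ⁽⁰⁾) + xᵢᵀλ ∈ W = g(V)` and `ωᵢ⋆(λ) = g⁻¹(νᵢ(λ))`,
`ℓ(λ) = −Σᵢ D_G(ωᵢ⋆(λ) ‖ ωᵢ⁽⁰⁾) + λᵀ(Σᵢ ωᵢ⋆(λ) xᵢ − T)
      = Σᵢ F(νᵢ(λ)) − λᵀT + C(ω⁽⁰⁾)`,
where `F(ν) = ν·g⁻¹(ν) − G(g⁻¹(ν))` is the convex conjugate of `G` and
`C(ω⁽⁰⁾) = Σᵢ {G(ωᵢ⁽⁰⁾) − g(ωᵢ⁽⁰⁾)·ωᵢ⁽⁰⁾}`. -/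
theorem bregman_dual_representation {ι : Type*} [Fintype ι] (p : ℕ)
    (V : Set ℝ) (hVo : IsOpen V) (hVc : Convex ℝ V)
    (G g : ℝ → ℝ) (hG : StrictConvexOn ℝ V G)
    (hg : ∀ t ∈ V, HasDerivAt G (g t) t)
    (hmono : StrictMonoOn g V)
    (ginv : ℝ → ℝ)
    (hginv1 : ∀ t ∈ V, ginv (g t) = t)
    (hginv2 : ∀ u ∈ g '' V, ginv u ∈ V ∧ g (ginv u) = u)
    (x : ι → Fin p → ℝ) (w0 : ι → ℝ) (hw0 : ∀ i, w0 i ∈ V)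
    (T : Fin p → ℝ) (lam : Fin p → ℝ)
    (nu : ι → ℝ) (hnu : ∀ i, nu i = g (w0 i) + ∑ k, x i k * lam k)
    (hdom : ∀ i, nu i ∈ g '' V) :
    -(∑ i, bregmanDiv G g (ginv (nu i)) (w0 i))
        + ∑ k, lam k * ((∑ i, ginv (nu i) * x i k) - T k)
      = (∑ i, (nu i * ginv (nu i) - G (ginv (nu i))))
          - (∑ k, lam k * T k)
          + ∑ i, (G (w0 i) - g (w0 i) * w0 i) := by
  have hswap : ∑ k, lam k * ∑ i, ginv (nu i) * x i k
      = ∑ i, ginv (nu i) * (nu i - g (w0 i)) := by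
    have hs : ∀ i, ginv (nu i) * (nu i - g (w0 i)) = ∑ k, ginv (nu i) * x i k * lam k := by
      intro i
      rw [hnu i, add_sub_cancel_left, Finset.mul_sum]
      exact Finset.sum_congr rfl fun k _ => by ring
    simp_rw [hs, Finset.mul_sum]
    rw [Finset.sum_comm]
    exact Finset.sum_congr rfl fun i _ => Finset.sum_congr rfl fun k _ => by ring
  have hexp : ∑ k, lam k * ((∑ i, ginv (nu i) * x i k) - T k)
      = (∑ i, ginv (nu i) * (nu i - g (w0 i))) - ∑ k, lam k * T k := by
    simp_rw [mul_sub]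
    rw [Finset.sum_sub_distrib, hswap, Finset.sum_sub_distrib]
    simp_rw [mul_sub, Finset.sum_sub_distrib]
  rw [hexp]
  have hmain : -(∑ i, bregmanDiv G g (ginv (nu i)) (w0 i))
      + ∑ i, ginv (nu i) * (nu i - g (w0 i))
      = (∑ i, (nu i * ginv (nu i) - G (ginv (nu i))))
        + ∑ i, (G (w0 i) - g (w0 i) * w0 i) := by
    rw [← Finset.sum_neg_distrib, ← Finset.sum_add_distrib, ← Finset.sum_add_distrib]
    exact Finset.sum_congr rfl fun i _ => by simp only [bregmanDiv]; ring
  linarith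
end

section
/- (Deterministic core of Theorem 1) Let W ⊆ ℝ be an open interval, F : W → ℝ three times continuously differentiable, S a finite index set of cardinality n, and for i ∈ S let x_i ∈ ℝ^p, y_i ∈ ℝ, c_i ∈ ℝ. For λ ∈ ℝ^p set ν_i(λ) = c_i + x_i^⊤λ. Fix λ₀ ∈ ℝ^p and X̄ ∈ ℝ^p, assume ν_i(λ₀) ∈ W for all i, set ω_i^⋆ = F'(ν_i(λ₀)) and q_i = F''(ν_i(λ₀)), assume M = Σ_{i∈S} q_i x_i x_i^⊤ is invertible, and define β̃ = M^{-1} Σ_{i∈S} q_i x_i y_i. Then there exist δ > 0 and C > 0 such that for every λ ∈ ℝ^p with ‖λ − λ₀‖ ≤ δ and satisfying the calibration equation (1/n)Σ_{i∈S} F'(ν_i(λ)) x_i = X̄, one has | (1/n)Σ_{i∈S} F'(ν_i(λ)) y_i − X̄^⊤β̃ − (1/n)Σ_{i∈S} ω_i^⋆ (y_i − x_i^⊤β̃) | ≤ C‖λ − λ₀‖². -/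
open Finset
open scoped RealInnerProductSpace

lemma taylor2_aux {F1 f2 f3 : ℝ → ℝ} {W : Set ℝ} {a b ε K : ℝ} (hK : 0 ≤ K)
    (hsub : Metric.closedBall a ε ⊆ W)
    (hd1 : ∀ t ∈ W, HasDerivAt F1 (f2 t) t)
    (hd2 : ∀ t ∈ W, HasDerivAt f2 (f3 t) t)
    (hKb : ∀ t ∈ Metric.closedBall a ε, |f3 t| ≤ K)
    (hb : b ∈ Metric.closedBall a ε) :
    |F1 b - F1 a - f2 a * (b - a)| ≤ K * (b - a) ^ 2 := by
  set s := Metric.closedBall a |b - a| with hs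
  have hba : |b - a| ≤ ε := by simpa [Real.dist_eq] using (Metric.mem_closedBall.1 hb)
  have hss : s ⊆ Metric.closedBall a ε := Metric.closedBall_subset_closedBall hba
  have has : a ∈ s := Metric.mem_closedBall_self (abs_nonneg _)
  have hbs : b ∈ s := by simp [hs, Metric.mem_closedBall, Real.dist_eq]
  have hconv : Convex ℝ s := convex_closedBall _ _
  have hf2b : ∀ t ∈ s, ‖f2 t - f2 a‖ ≤ K * |b - a| := by
    intro t ht
    have h := hconv.norm_image_sub_le_of_norm_hasDerivWithin_le
      (fun u hu => (hd2 u (hsub (hss hu))).hasDerivWithinAt)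
      (fun u hu => by simpa [Real.norm_eq_abs] using hKb u (hss hu)) has ht
    calc ‖f2 t - f2 a‖ ≤ K * ‖t - a‖ := h
      _ ≤ K * |b - a| := by
          apply mul_le_mul_of_nonneg_left _ hK
          simpa [Real.norm_eq_abs, Real.dist_eq] using (Metric.mem_closedBall.1 ht)
  have hg : ∀ t ∈ s, HasDerivWithinAt (fun u => F1 u - f2 a * u) (f2 t - f2 a) s t := by
    intro t ht
    have h1 : HasDerivAt (fun u => f2 a * u) (f2 a) t := by
      simpa using (hasDerivAt_id t).const_mul (f2 a)
    exact ((hd1 t (hsub (hss ht))).sub h1).hasDerivWithinAt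
  have h := hconv.norm_image_sub_le_of_norm_hasDerivWithin_le hg hf2b has hbs
  calc |F1 b - F1 a - f2 a * (b - a)|
      = ‖(F1 b - f2 a * b) - (F1 a - f2 a * a)‖ := by rw [Real.norm_eq_abs]; ring_nf
    _ ≤ K * |b - a| * ‖b - a‖ := h
    _ = K * (b - a) ^ 2 := by rw [Real.norm_eq_abs, mul_assoc, abs_mul_abs_self, sq]

/-- **deterministic core of Theorem 1.** Second-order expansion of the
Bregman calibration estimator: with `νᵢ(λ) = cᵢ + xᵢᵀλ`, `F` three times continuously
differentiable on the open interval `W`, `ωᵢ⋆ = F'(νᵢ(λ₀))`, `qᵢ = F''(νᵢ(λ₀))`,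
`M = Σᵢ qᵢ xᵢ xᵢᵀ` invertible (stated here as injectivity of `v ↦ Σᵢ qᵢ⟪xᵢ,v⟫xᵢ`),
and `β̃ = M⁻¹ Σᵢ qᵢ xᵢ yᵢ` (stated via `M β̃ = Σᵢ qᵢ yᵢ xᵢ`), there exist `δ, C > 0`
such that every `λ` with `‖λ − λ₀‖ ≤ δ` solving the calibration equation
`n⁻¹ Σᵢ F'(νᵢ(λ)) xᵢ = X̄` satisfies
`|n⁻¹ Σᵢ F'(νᵢ(λ)) yᵢ − X̄ᵀβ̃ − n⁻¹ Σᵢ ωᵢ⋆(yᵢ − xᵢᵀβ̃)| ≤ C‖λ − λ₀‖²`. -/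
theorem bregman_calibration_expansion {ι : Type*} [Fintype ι] (p : ℕ)
    (W : Set ℝ) (hWo : IsOpen W) (hWc : Convex ℝ W)
    (F f1 f2 f3 : ℝ → ℝ)
    (hf1 : ∀ t ∈ W, HasDerivAt F (f1 t) t)
    (hf2 : ∀ t ∈ W, HasDerivAt f1 (f2 t) t)
    (hf3 : ∀ t ∈ W, HasDerivAt f2 (f3 t) t)
    (hf3c : ContinuousOn f3 W)
    (x : ι → EuclideanSpace ℝ (Fin p)) (y : ι → ℝ) (c : ι → ℝ)
    (lam0 Xbar : EuclideanSpace ℝ (Fin p))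
    (hdom : ∀ i, c i + ⟪x i, lam0⟫ ∈ W)
    (hMinv : Function.Injective
      (fun v : EuclideanSpace ℝ (Fin p) =>
        ∑ i, (f2 (c i + ⟪x i, lam0⟫) * ⟪x i, v⟫) • x i))
    (beta : EuclideanSpace ℝ (Fin p))
    (hbeta : ∑ i, (f2 (c i + ⟪x i, lam0⟫) * ⟪x i, beta⟫) • x i
      = ∑ i, (f2 (c i + ⟪x i, lam0⟫) * y i) • x i) :
    ∃ δ > (0 : ℝ), ∃ C > (0 : ℝ), ∀ lam : EuclideanSpace ℝ (Fin p),
      ‖lam - lam0‖ ≤ δ →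
      ((Fintype.card ι : ℝ)⁻¹ • ∑ i, f1 (c i + ⟪x i, lam⟫) • x i = Xbar) →
      |(Fintype.card ι : ℝ)⁻¹ * (∑ i, f1 (c i + ⟪x i, lam⟫) * y i)
          - ⟪Xbar, beta⟫
          - (Fintype.card ι : ℝ)⁻¹ * (∑ i, f1 (c i + ⟪x i, lam0⟫) * (y i - ⟪x i, beta⟫))|
        ≤ C * ‖lam - lam0‖ ^ 2 := by
  by_cases hne : Nonempty ι
  case neg =>
    haveI : IsEmpty ι := not_nonempty_iff.1 hne
    refine ⟨1, one_pos, 1, one_pos, fun lam hlam hcal => ?_⟩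
    have hX : Xbar = 0 := by simpa using hcal.symm
    simp [hX]
  case pos =>
  haveI := hne
  have hne' : (Finset.univ : Finset ι).Nonempty := univ_nonempty
  set n : ℝ := (Fintype.card ι : ℝ) with hn
  have hn1 : (1 : ℝ) ≤ n := by
    have h : 1 ≤ Fintype.card ι := Fintype.card_pos
    rw [hn]; exact_mod_cast h
  have hn0 : (0 : ℝ) < n := lt_of_lt_of_le one_pos hn1
  set a : ι → ℝ := fun i => c i + ⟪x i, lam0⟫ with ha
  -- radius: closed balls around a i inside W
  have hball : ∀ i, ∃ ε > (0:ℝ), Metric.closedBall (a i) ε ⊆ W := by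
    intro i
    obtain ⟨ε, hε, hsub⟩ := Metric.isOpen_iff.1 hWo (a i) (hdom i)
    exact ⟨ε / 2, by positivity, (Metric.closedBall_subset_ball (half_lt_self hε)).trans hsub⟩
  choose ε hεpos hεsub using hball
  set εm : ℝ := univ.inf' hne' ε with hεm
  have hεm0 : 0 < εm := by
    rw [hεm, Finset.lt_inf'_iff]
    exact fun i _ => hεpos i
  have hεmsub : ∀ i, Metric.closedBall (a i) εm ⊆ W := fun i =>
    (Metric.closedBall_subset_closedBall (Finset.inf'_le ε (mem_univ i))).trans (hεsub i)
  -- bound on f3 on the balls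
  have hKbd : ∀ i, ∃ Ki, ∀ t ∈ Metric.closedBall (a i) εm, |f3 t| ≤ Ki := by
    intro i
    obtain ⟨Ki, hKi⟩ := (isCompact_closedBall (a i) εm).exists_bound_of_continuousOn
      (hf3c.mono (hεmsub i))
    exact ⟨Ki, fun t ht => by simpa [Real.norm_eq_abs] using hKi t ht⟩
  choose Ki hKi using hKbd
  set K : ℝ := max 0 (univ.sup' hne' Ki) with hKdef
  have hK0 : 0 ≤ K := le_max_left _ _
  have hKb : ∀ i, ∀ t ∈ Metric.closedBall (a i) εm, |f3 t| ≤ K := fun i t ht =>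
    (hKi i t ht).trans ((Finset.le_sup' Ki (mem_univ i)).trans (le_max_right _ _))
  -- bound on ‖x i‖
  set B : ℝ := univ.sup' hne' (fun i => ‖x i‖) with hB
  have hB0 : 0 ≤ B := by
    rw [hB]
    exact le_trans (norm_nonneg (x hne'.choose))
      (Finset.le_sup' (fun i => ‖x i‖) (mem_univ hne'.choose))
  set δ : ℝ := εm / (B + 1) with hδ
  have hδ0 : 0 < δ := by positivity
  set C0 : ℝ := ∑ i, K * ‖x i‖ ^ 2 * |y i - ⟪x i, beta⟫| with hC0
  have hC00 : 0 ≤ C0 := Finset.sum_nonneg fun i _ => by positivity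
  refine ⟨δ, hδ0, C0 + 1, by positivity, fun lam hlam hcal => ?_⟩
  set v := lam - lam0 with hv
  have hnu : ∀ i, c i + ⟪x i, lam⟫ = a i + ⟪x i, v⟫ := by
    intro i
    have : ⟪x i, v⟫ = ⟪x i, lam⟫ - ⟪x i, lam0⟫ := inner_sub_right _ _ _
    rw [ha]; rw [this]; ring
  have hmem : ∀ i, a i + ⟪x i, v⟫ ∈ Metric.closedBall (a i) εm := by
    intro i
    rw [Metric.mem_closedBall, Real.dist_eq, add_sub_cancel_left]
    calc |⟪x i, v⟫| ≤ ‖x i‖ * ‖v‖ := abs_real_inner_le_norm _ _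
      _ ≤ (B + 1) * δ := by
          apply mul_le_mul _ hlam (norm_nonneg _) (by positivity)
          exact le_trans (Finset.le_sup' (fun i => ‖x i‖) (mem_univ i)) (by linarith)
      _ = εm := by rw [hδ]; field_simp
  set r : ι → ℝ := fun i => f1 (a i + ⟪x i, v⟫) - f1 (a i) - f2 (a i) * ⟪x i, v⟫ with hr
  have hrb : ∀ i, |r i| ≤ K * ‖x i‖ ^ 2 * ‖v‖ ^ 2 := by
    intro i
    have h := taylor2_aux hK0 (hεmsub i) hf2 hf3 (hKb i) (hmem i)
    rw [add_sub_cancel_left] at h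
    calc |r i| ≤ K * ⟪x i, v⟫ ^ 2 := h
      _ ≤ K * (‖x i‖ * ‖v‖) ^ 2 := by
          apply mul_le_mul_of_nonneg_left _ hK0
          calc ⟪x i, v⟫ ^ 2 = |⟪x i, v⟫| ^ 2 := (sq_abs _).symm
            _ ≤ (‖x i‖ * ‖v‖) ^ 2 :=
              pow_le_pow_left₀ (abs_nonneg _) (abs_real_inner_le_norm _ _) 2
      _ = K * ‖x i‖ ^ 2 * ‖v‖ ^ 2 := by ring
  -- first-order term vanishes
  have h0 : ∑ i, (f2 (a i) * (y i - ⟪x i, beta⟫)) • x i = 0 := by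
    have : ∑ i, (f2 (a i) * (y i - ⟪x i, beta⟫)) • x i
        = ∑ i, (f2 (a i) * y i) • x i - ∑ i, (f2 (a i) * ⟪x i, beta⟫) • x i := by
      rw [← Finset.sum_sub_distrib]
      exact Finset.sum_congr rfl fun i _ => by rw [mul_sub, sub_smul]
    rw [this, ← hbeta, sub_self]
  have hzero : ∑ i, f2 (a i) * (y i - ⟪x i, beta⟫) * ⟪x i, v⟫ = 0 := by
    have h1 : ⟪(∑ i, (f2 (a i) * (y i - ⟪x i, beta⟫)) • x i : EuclideanSpace ℝ (Fin p)), v⟫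
        = (0:ℝ) := by rw [h0, inner_zero_left]
    rw [sum_inner] at h1
    rw [← h1]
    exact Finset.sum_congr rfl fun i _ => by rw [real_inner_smul_left]
  -- express Xbar inner product
  have hXb : ⟪Xbar, beta⟫ = n⁻¹ * ∑ i, f1 (c i + ⟪x i, lam⟫) * ⟪x i, beta⟫ := by
    rw [← hcal, real_inner_smul_left, sum_inner]
    congr 1
    exact Finset.sum_congr rfl fun i _ => real_inner_smul_left _ _ _
  have hsum : ∑ i, r i * (y i - ⟪x i, beta⟫)
      = (∑ i, f1 (c i + ⟪x i, lam⟫) * y i)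
        - (∑ i, f1 (c i + ⟪x i, lam⟫) * ⟪x i, beta⟫)
        - ∑ i, f1 (a i) * (y i - ⟪x i, beta⟫) := by
    have e1 : ∀ i ∈ univ, r i * (y i - ⟪x i, beta⟫)
        = (f1 (c i + ⟪x i, lam⟫) * y i - f1 (c i + ⟪x i, lam⟫) * ⟪x i, beta⟫
            - f1 (a i) * (y i - ⟪x i, beta⟫))
          - f2 (a i) * (y i - ⟪x i, beta⟫) * ⟪x i, v⟫ := by
      intro i _
      rw [hr, hnu i]; ring
    rw [Finset.sum_congr rfl e1, Finset.sum_sub_distrib, hzero, sub_zero,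
      Finset.sum_sub_distrib, Finset.sum_sub_distrib]
  have heq : (Fintype.card ι : ℝ)⁻¹ * (∑ i, f1 (c i + ⟪x i, lam⟫) * y i)
          - ⟪Xbar, beta⟫
          - (Fintype.card ι : ℝ)⁻¹ * (∑ i, f1 (c i + ⟪x i, lam0⟫) * (y i - ⟪x i, beta⟫))
      = n⁻¹ * ∑ i, r i * (y i - ⟪x i, beta⟫) := by
    rw [hsum, hXb, ← hn]; ring
  rw [heq, abs_mul, abs_of_nonneg (by positivity : (0:ℝ) ≤ n⁻¹)]
  have hS : |∑ i, r i * (y i - ⟪x i, beta⟫)| ≤ C0 * ‖v‖ ^ 2 := by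
    calc |∑ i, r i * (y i - ⟪x i, beta⟫)| ≤ ∑ i, |r i * (y i - ⟪x i, beta⟫)| :=
        Finset.abs_sum_le_sum_abs _ _
      _ ≤ ∑ i, K * ‖x i‖ ^ 2 * |y i - ⟪x i, beta⟫| * ‖v‖ ^ 2 := by
          apply Finset.sum_le_sum
          intro i _
          rw [abs_mul]
          calc |r i| * |y i - ⟪x i, beta⟫|
              ≤ K * ‖x i‖ ^ 2 * ‖v‖ ^ 2 * |y i - ⟪x i, beta⟫| :=
                mul_le_mul_of_nonneg_right (hrb i) (abs_nonneg _)
            _ = K * ‖x i‖ ^ 2 * |y i - ⟪x i, beta⟫| * ‖v‖ ^ 2 := by ring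
      _ = C0 * ‖v‖ ^ 2 := by rw [hC0, ← Finset.sum_mul]
  have hninv : n⁻¹ ≤ 1 := by
    rw [inv_le_one_iff₀]; right; exact hn1
  calc n⁻¹ * |∑ i, r i * (y i - ⟪x i, beta⟫)|
      ≤ 1 * (C0 * ‖v‖ ^ 2) := mul_le_mul hninv hS (abs_nonneg _) one_pos.le
    _ = C0 * ‖v‖ ^ 2 := one_mul _
    _ ≤ (C0 + 1) * ‖v‖ ^ 2 := by nlinarith [sq_nonneg ‖v‖]
end

section
/- (Deterministic core of Lemma 2) Let W ⊆ ℝ be an open interval, F : W → ℝ twice continuously differentiable, S a finite index set of cardinality n, x_i ∈ ℝ^p and c_i ∈ ℝ for i ∈ S, and X̄ ∈ ℝ^p. Set ν_i(λ) = c_i + x_i^⊤λ and suppose: (i) there exist r > 0 and c_g > 0 such that for all λ with ‖λ‖ ≤ r and all i ∈ S, ν_i(λ) ∈ W and F''(ν_i(λ)) ≥ c_g; (ii) the smallest eigenvalue of (1/n)Σ_{i∈S} x_i x_i^⊤ is at least c_x > 0. Write ω_i^{(0)} = F'(ν_i(0)) = F'(c_i). Then every λ̂ with ‖λ̂‖ ≤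 r solving the calibration equation (1/n)Σ_{i∈S} F'(ν_i(λ̂)) x_i = X̄ satisfies ‖λ̂‖ ≤ (c_g c_x)^{-1} ‖(1/n)Σ_{i∈S} ω_i^{(0)} x_i − X̄‖. -/
open Finset
open scoped RealInnerProductSpace

/-!
Along the segment from `λ = 0` to `λ̂`, each `νᵢ` stays in the region where `F'' ≥ c_g`,
so the mean value theorem makes `F'` strongly monotone there:
`(F'(νᵢ(λ̂)) - F'(cᵢ)) ⟪xᵢ, λ̂⟫ ≥ c_g ⟪xᵢ, λ̂⟫²`. Averaging over `i` and using the eigenvalue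
bound gives `c_g c_x ‖λ̂‖² ≤ ⟪X̄ - n⁻¹ Σᵢ ωᵢ⁽⁰⁾ xᵢ, λ̂⟫`, and Cauchy–Schwarz finishes.
-/

theorem Convex.mul_sq_le_sub_mul_sub_of_le_deriv {D : Set ℝ} (hD : Convex ℝ D)
    {g g' : ℝ → ℝ} {m : ℝ} (hg : ∀ t ∈ D, HasDerivAt g (g' t) t) (hm : ∀ t ∈ D, m ≤ g' t)
    {a b : ℝ} (ha : a ∈ D) (hb : b ∈ D) :
    m * (b - a) ^ 2 ≤ (g b - g a) * (b - a) := by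
  have hcont : ContinuousOn g D := fun t ht => (hg t ht).continuousAt.continuousWithinAt
  have hdiff : DifferentiableOn ℝ g (interior D) := fun t ht =>
    (hg t (interior_subset ht)).differentiableAt.differentiableWithinAt
  have hderiv : ∀ t ∈ interior D, m ≤ deriv g t := fun t ht => by
    rw [(hg t (interior_subset ht)).deriv]
    exact hm t (interior_subset ht)
  have hgrowth := hD.mul_sub_le_image_sub_of_le_deriv hcont hdiff hderiv
  rcases le_total a b with hab | hba
  · nlinarith [hgrowth a ha b hb hab]
  · nlinarith [hgrowth b hb a ha hba]

section InnerProductSpace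

variable {E : Type*} [NormedAddCommGroup E] [InnerProductSpace ℝ E]

theorem convex_image_closedBall_add_inner (c : ℝ) (x : E) (r : ℝ) :
    Convex ℝ ((fun μ => c + ⟪x, μ⟫) '' Metric.closedBall 0 r) := by
  have h := ((convex_closedBall (0 : E) r).linear_image (innerₛₗ ℝ x)).translate c
  rwa [Set.image_image] at h

theorem mul_inner_sq_le_sub_mul_inner_of_le_deriv {W : Set ℝ} {g g' : ℝ → ℝ}
    (hg : ∀ t ∈ W, HasDerivAt g (g' t) t) {c m r : ℝ} {x lam : E}
    (hball : ∀ μ : E, ‖μ‖ ≤ r → c + ⟪x, μ⟫ ∈ W ∧ m ≤ g' (c + ⟪x, μ⟫)) (hlam : ‖lam‖ ≤ r) :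
    m * ⟪x, lam⟫ ^ 2 ≤ (g (c + ⟪x, lam⟫) - g c) * ⟪x, lam⟫ := by
  have hball' : ∀ μ ∈ Metric.closedBall 0 r, c + ⟪x, μ⟫ ∈ W ∧ m ≤ g' (c + ⟪x, μ⟫) :=
    fun μ hμ => hball μ (mem_closedBall_zero_iff.1 hμ)
  have h0 : (0 : E) ∈ Metric.closedBall 0 r := by simpa using (norm_nonneg lam).trans hlam
  have h := (convex_image_closedBall_add_inner c x r).mul_sq_le_sub_mul_sub_of_le_deriv
    (Set.forall_mem_image.2 fun μ hμ => hg _ (hball' μ hμ).1)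
    (Set.forall_mem_image.2 fun μ hμ => (hball' μ hμ).2) (Set.mem_image_of_mem _ h0)
    (Set.mem_image_of_mem _ (mem_closedBall_zero_iff.2 hlam))
  simpa using h

theorem norm_le_inv_mul_norm_of_mul_sq_le_inner {m : ℝ} (hm : 0 < m) {u v : E}
    (h : m * ‖v‖ ^ 2 ≤ ⟪u, v⟫) : ‖v‖ ≤ m⁻¹ * ‖u‖ := by
  have hCS : m * ‖v‖ * ‖v‖ ≤ ‖u‖ * ‖v‖ := by nlinarith [real_inner_le_norm u v]
  rcases (norm_nonneg v).eq_or_lt with hv | hv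
  · rw [← hv]; positivity
  · rw [inv_mul_eq_div, le_div_iff₀ hm, mul_comm]
    exact le_of_mul_le_mul_right hCS hv

theorem inner_smul_sum_sub_smul_sum {ι : Type*} [Fintype ι] (n : ℝ) (u v : ι → ℝ)
    (x : ι → E) (w : E) :
    ⟪n • ∑ i, u i • x i - n • ∑ i, v i • x i, w⟫ = n * ∑ i, (u i - v i) * ⟪x i, w⟫ := by
  rw [← smul_sub, ← sum_sub_distrib, real_inner_smul_left, sum_inner]
  simp only [← sub_smul, real_inner_smul_left]

end InnerProductSpace

theorem lambda_hat_norm_bound_general {ι : Type*} [Fintype ι] (p : ℕ)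
    (W : Set ℝ) (f1 f2 : ℝ → ℝ)
    (hf2 : ∀ t ∈ W, HasDerivAt f1 (f2 t) t)
    (x : ι → EuclideanSpace ℝ (Fin p)) (c : ι → ℝ)
    (Xbar : EuclideanSpace ℝ (Fin p))
    (r cg cx : ℝ) (hcg : 0 < cg) (hcx : 0 < cx)
    (hlower : ∀ lam : EuclideanSpace ℝ (Fin p), ‖lam‖ ≤ r → ∀ i,
      c i + ⟪x i, lam⟫ ∈ W ∧ cg ≤ f2 (c i + ⟪x i, lam⟫))
    (heig : ∀ v : EuclideanSpace ℝ (Fin p),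
      cx * ‖v‖ ^ 2 ≤ (Fintype.card ι : ℝ)⁻¹ * ∑ i, ⟪x i, v⟫ ^ 2) :
    ∀ lamhat : EuclideanSpace ℝ (Fin p), ‖lamhat‖ ≤ r →
      ((Fintype.card ι : ℝ)⁻¹ • ∑ i, f1 (c i + ⟪x i, lamhat⟫) • x i = Xbar) →
      ‖lamhat‖ ≤ (cg * cx)⁻¹
        * ‖(Fintype.card ι : ℝ)⁻¹ • (∑ i, f1 (c i) • x i) - Xbar‖ := by
  intro lamhat hlamhat hcal
  have hstep : ∀ i, cg * ⟪x i, lamhat⟫ ^ 2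
      ≤ (f1 (c i + ⟪x i, lamhat⟫) - f1 (c i)) * ⟪x i, lamhat⟫ := fun i =>
    mul_inner_sq_le_sub_mul_inner_of_le_deriv hf2 (fun μ hμ => hlower μ hμ i) hlamhat
  have hmono : cg * cx * ‖lamhat‖ ^ 2 ≤
      ⟪Xbar - (Fintype.card ι : ℝ)⁻¹ • ∑ i, f1 (c i) • x i, lamhat⟫ := calc
    cg * cx * ‖lamhat‖ ^ 2 ≤ cg * ((Fintype.card ι : ℝ)⁻¹ * ∑ i, ⟪x i, lamhat⟫ ^ 2) := by
      rw [mul_assoc]; exact mul_le_mul_of_nonneg_left (heig lamhat) hcg.le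
    _ = (Fintype.card ι : ℝ)⁻¹ * ∑ i, cg * ⟪x i, lamhat⟫ ^ 2 := by
      rw [← mul_sum]; ring
    _ ≤ (Fintype.card ι : ℝ)⁻¹ * ∑ i, (f1 (c i + ⟪x i, lamhat⟫) - f1 (c i)) * ⟪x i, lamhat⟫ :=
      mul_le_mul_of_nonneg_left (sum_le_sum fun i _ => hstep i) (by positivity)
    _ = _ := by rw [← hcal, inner_smul_sum_sub_smul_sum]
  rw [norm_sub_rev]
  exact norm_le_inv_mul_norm_of_mul_sq_le_inner (mul_pos hcg hcx) hmono

/-- **deterministic core of Lemma 2.** With `νᵢ(λ) = cᵢ + xᵢᵀλ`,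
`F` twice continuously differentiable on the open interval `W`, suppose
(i) for all `‖λ‖ ≤ r` and all `i`, `νᵢ(λ) ∈ W` and `F''(νᵢ(λ)) ≥ c_g > 0`; and
(ii) the smallest eigenvalue of `n⁻¹ Σᵢ xᵢ xᵢᵀ` is at least `c_x > 0` (stated as
`c_x‖v‖² ≤ n⁻¹ Σᵢ ⟪xᵢ, v⟫²` for all `v`). Writing `ωᵢ⁽⁰⁾ = F'(νᵢ(0)) = F'(cᵢ)`,
every `λ̂` with `‖λ̂‖ ≤ r` solving the calibration equation
`n⁻¹ Σᵢ F'(νᵢ(λ̂)) xᵢ = X̄` satisfies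
`‖λ̂‖ ≤ (c_g c_x)⁻¹ ‖n⁻¹ Σᵢ ωᵢ⁽⁰⁾ xᵢ − X̄‖`. -/
theorem lambda_hat_norm_bound {ι : Type*} [Fintype ι] (p : ℕ)
    (W : Set ℝ) (hWo : IsOpen W) (hWc : Convex ℝ W)
    (F f1 f2 : ℝ → ℝ)
    (hf1 : ∀ t ∈ W, HasDerivAt F (f1 t) t)
    (hf2 : ∀ t ∈ W, HasDerivAt f1 (f2 t) t)
    (hf2c : ContinuousOn f2 W)
    (x : ι → EuclideanSpace ℝ (Fin p)) (c : ι → ℝ)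
    (Xbar : EuclideanSpace ℝ (Fin p))
    (r cg cx : ℝ) (hr : 0 < r) (hcg : 0 < cg) (hcx : 0 < cx)
    (hlower : ∀ lam : EuclideanSpace ℝ (Fin p), ‖lam‖ ≤ r → ∀ i,
      c i + ⟪x i, lam⟫ ∈ W ∧ cg ≤ f2 (c i + ⟪x i, lam⟫))
    (heig : ∀ v : EuclideanSpace ℝ (Fin p),
      cx * ‖v‖ ^ 2 ≤ (Fintype.card ι : ℝ)⁻¹ * ∑ i, ⟪x i, v⟫ ^ 2) :
    ∀ lamhat : EuclideanSpace ℝ (Fin p), ‖lamhat‖ ≤ r →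
      ((Fintype.card ι : ℝ)⁻¹ • ∑ i, f1 (c i + ⟪x i, lamhat⟫) • x i = Xbar) →
      ‖lamhat‖ ≤ (cg * cx)⁻¹
        * ‖(Fintype.card ι : ℝ)⁻¹ • (∑ i, f1 (c i) • x i) - Xbar‖ :=
  lambda_hat_norm_bound_general p W f1 f2 hf2 x c Xbar r cg cx hcg hcx hlower heig
end
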